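/- arXiv:0811.1825 — 4 statements merged into one kernel-verified Lean document; each statement's English description precedes it below -/
import Mathlib

section
/- Let α and β be positive probability measures on Σ and s, t ∈ [0,∞). If d : Σ* → [0,∞) is an s-α-gale, then the function d̃ defined by d̃(w) = (α(w)^s / β(w)^t) · d(w) is a t-β-gale, where α(w) and β(w) denote the product of the measures of the symbols of w. -/
/-!
Write `ρ(w) = α(w)^s / β(w)^t`. Since `α(wa) = α(w) α(a)` and likewise for `β`, one has
`ρ(wa) β(a)^t = ρ(w) α(a)^s`, so multiplying the `s`-`α`-gale identity for `d` at `w` by `ρ(w)`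
gives exactly the `t`-`β`-gale identity for `ρ d` at `w`.
-/

open Finset

section Gale

variable {σ : Type*}

def IsGale [Fintype σ] (α : σ → ℝ) (s : ℝ) (d : List σ → ℝ) : Prop :=
  ∀ w, d w = ∑ a, d (w ++ [a]) * α a ^ s

lemma prod_map_nonneg {α : σ → ℝ} (hα : ∀ a, 0 ≤ α a) (w : List σ) : 0 ≤ (w.map α).prod :=
  List.prod_nonneg (by simpa using fun a _ => hα a)

lemma rpow_prod_map_append_singleton {α : σ → ℝ} (hα : ∀ a, 0 ≤ α a) (s : ℝ) (w : List σ)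
    (a : σ) : ((w ++ [a]).map α).prod ^ s = (w.map α).prod ^ s * α a ^ s := by
  simp only [List.map_append, List.map_cons, List.map_nil, List.prod_append, List.prod_cons,
    List.prod_nil, mul_one]
  exact Real.mul_rpow (prod_map_nonneg hα w) (hα a)

lemma change_of_measure_factor_append_singleton {α β : σ → ℝ} (hα : ∀ a, 0 ≤ α a)
    (hβ : ∀ a, 0 < β a) (s t : ℝ) (w : List σ) (a : σ) :
    ((w ++ [a]).map α).prod ^ s / ((w ++ [a]).map β).prod ^ t * β a ^ t =
      (w.map α).prod ^ s / (w.map β).prod ^ t * α a ^ s := by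
  have hβa : β a ^ t ≠ 0 := (Real.rpow_pos_of_pos (hβ a) t).ne'
  rw [rpow_prod_map_append_singleton hα, rpow_prod_map_append_singleton (fun a => (hβ a).le)]
  field_simp

theorem IsGale.change_of_measure [Fintype σ] {α β : σ → ℝ} {s t : ℝ} {d : List σ → ℝ} (hd : IsGale α s d)
    (hα : ∀ a, 0 ≤ α a) (hβ : ∀ a, 0 < β a) :
    IsGale β t fun w => (w.map α).prod ^ s / (w.map β).prod ^ t * d w := by
  intro w
  calc (w.map α).prod ^ s / (w.map β).prod ^ t * d w
      = ∑ a, (w.map α).prod ^ s / (w.map β).prod ^ t * α a ^ s * d (w ++ [a]) := by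
        rw [hd w, mul_sum]
        exact sum_congr rfl fun a _ => by ring
    _ = ∑ a, ((w ++ [a]).map α).prod ^ s / ((w ++ [a]).map β).prod ^ t * d (w ++ [a]) *
          β a ^ t := by
        refine sum_congr rfl fun a _ => ?_
        rw [← change_of_measure_factor_append_singleton hα hβ]
        ring

end Gale

theorem gale_change_of_measure_general
    (k : ℕ)
    (α β : Fin k → ℝ) (hαpos : ∀ a, 0 < α a) (hβpos : ∀ a, 0 < β a)
    (s t : ℝ)
    (d : List (Fin k) → ℝ) (hd0 : ∀ w, 0 ≤ d w)
    (hgale : ∀ w, d w = ∑ a, d (w ++ [a]) * (α a) ^ s) :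
    (∀ w, 0 ≤ ((w.map α).prod ^ s / (w.map β).prod ^ t) * d w) ∧
    (∀ w, ((w.map α).prod ^ s / (w.map β).prod ^ t) * d w =
      ∑ a, (((w ++ [a]).map α).prod ^ s / ((w ++ [a]).map β).prod ^ t) *
            d (w ++ [a]) * (β a) ^ t) := by
  have hα : ∀ a, 0 ≤ α a := fun a => (hαpos a).le
  refine ⟨fun w => ?_, IsGale.change_of_measure hgale hα hβpos⟩
  have hαw := prod_map_nonneg hα w
  have hβw := prod_map_nonneg (fun a => (hβpos a).le) w
  exact mul_nonneg (div_nonneg (Real.rpow_nonneg hαw s) (Real.rpow_nonneg hβw t)) (hd0 w)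

/-- Observation 2.1: if `d` is an `s`-`α`-gale then
`d̃(w) = (α(w)^s / β(w)^t) · d(w)` is a `t`-`β`-gale, where `α(w)` denotes
the product of the symbol probabilities of `w`. -/
theorem gale_change_of_measure
    (k : ℕ) (hk : 2 ≤ k)
    (α β : Fin k → ℝ) (hαpos : ∀ a, 0 < α a) (hβpos : ∀ a, 0 < β a)
    (hα1 : ∑ a, α a = 1) (hβ1 : ∑ a, β a = 1)
    (s t : ℝ) (hs : 0 ≤ s) (ht : 0 ≤ t)
    (d : List (Fin k) → ℝ) (hd0 : ∀ w, 0 ≤ d w)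
    (hgale : ∀ w, d w = ∑ a, d (w ++ [a]) * (α a) ^ s) :
    (∀ w, 0 ≤ ((w.map α).prod ^ s / (w.map β).prod ^ t) * d w) ∧
    (∀ w, ((w.map α).prod ^ s / (w.map β).prod ^ t) * d w =
      ∑ a, (((w ++ [a]).map α).prod ^ s / ((w ++ [a]).map β).prod ^ t) *
            d (w ++ [a]) * (β a) ^ t) :=
  gale_change_of_measure_general k α β hαpos hβpos s t d hd0 hgale
end

section
/- If α and β are positive probability measures on Σ and S ∈ FREQ^α, then the ratio of self-informations I_μ(w)/I_β(w) converges to 1/(H_k(α) + D_k(α‖β)) as w → S, where μ is the uniform measure on Σ = {0,...,k−1}, H_k(α) = H(α)/log k, and D_k(α‖β) = D(α‖β)/log k. -/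
/-!
Writing `|w|_a` for the number of occurrences of `a` in `w`, the β-self-information is
`I_β(w) = ∑_a |w|_a log(1/β a)`, so along prefixes of `S` the average `I_β(w)/|w|` tends to the
cross entropy `∑_a α a log(1/β a) = H(α) + D(α‖β)`. This limit is positive because every
`β a < 1`, and dividing `I_μ(w)/|w| = log k` by it gives the claim.
-/

open Filter Finset

theorem List.sum_map_eq_sum_count {ι M : Type*} [Fintype ι] [DecidableEq ι] [AddCommMonoid M]
    (l : List ι) (f : ι → M) : (l.map f).sum = ∑ a, l.count a • f a := by
  rw [Finset.sum_list_map_count]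
  refine Finset.sum_subset (Finset.subset_univ _) fun a _ ha => ?_
  rw [List.count_eq_zero_of_not_mem (mt List.mem_toFinset.2 ha), zero_smul]

theorem tendsto_sum_map_div_of_tendsto_count_div {ι : Type*} [Fintype ι] [DecidableEq ι]
    (l : ℕ → List ι) (α f : ι → ℝ)
    (hfreq : ∀ a, Tendsto (fun n => ((l n).count a : ℝ) / n) atTop (nhds (α a))) :
    Tendsto (fun n => ((l n).map f).sum / n) atTop (nhds (∑ a, α a * f a)) := by
  have hsum : ∀ n : ℕ, ((l n).map f).sum / n = ∑ a, ((l n).count a : ℝ) / n * f a := by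
    intro n
    rw [List.sum_map_eq_sum_count, Finset.sum_div]
    exact Finset.sum_congr rfl fun a _ => by rw [nsmul_eq_mul]; ring
  simp only [hsum]
  exact tendsto_finsetSum _ fun a _ => (hfreq a).mul_const (f a)

theorem lt_one_of_sum_eq_one {ι : Type*} [Fintype ι] (hcard : 1 < Fintype.card ι)
    {β : ι → ℝ} (hβpos : ∀ a, 0 < β a) (hβ1 : ∑ a, β a = 1) (a : ι) : β a < 1 := by
  obtain ⟨b, hba⟩ := Fintype.exists_ne_of_one_lt_card hcard a
  exact hβ1 ▸ single_lt_sum hba (mem_univ a) (mem_univ b) (hβpos b) fun c _ _ => (hβpos c).le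

theorem entropy_add_klDiv_eq_crossEntropy {ι : Type*} [Fintype ι] (α β : ι → ℝ)
    (hβ : ∀ a, β a ≠ 0) (b : ℝ) :
    ∑ a, α a * Real.logb b (α a)⁻¹ + ∑ a, α a * Real.logb b (α a / β a) =
      ∑ a, α a * Real.logb b (β a)⁻¹ := by
  rw [← Finset.sum_add_distrib]
  refine Finset.sum_congr rfl fun a _ => ?_
  rcases eq_or_ne (α a) 0 with hα | hα
  · simp [hα]
  · rw [← mul_add, Real.logb_inv, Real.logb_div hα (hβ a), Real.logb_inv]
    ring

theorem crossEntropy_pos {ι : Type*} [Fintype ι] [Nonempty ι] {α β : ι → ℝ}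
    (hαpos : ∀ a, 0 < α a) (hβpos : ∀ a, 0 < β a) (hβlt : ∀ a, β a < 1) :
    0 < ∑ a, α a * Real.logb 2 (β a)⁻¹ :=
  Finset.sum_pos (fun a _ => mul_pos (hαpos a)
    (Real.logb_pos one_lt_two ((one_lt_inv₀ (hβpos a)).2 (hβlt a)))) univ_nonempty

theorem selfInfo_ratio_tendsto_general
    (k : ℕ) (hk : 2 ≤ k)
    (α β : Fin k → ℝ) (hαpos : ∀ a, 0 < α a) (hβpos : ∀ a, 0 < β a)
    (hβ1 : ∑ a, β a = 1)
    (S : ℕ → Fin k)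
    (hfreq : ∀ a : Fin k, Filter.Tendsto
      (fun n => (((List.range n).map S).count a : ℝ) / n) Filter.atTop (nhds (α a))) :
    Filter.Tendsto
      (fun n : ℕ => ((n : ℝ) * Real.logb 2 k) /
        (((List.range n).map S).map fun a => Real.logb 2 (β a)⁻¹).sum)
      Filter.atTop
      (nhds (((∑ a, α a * Real.logb 2 (α a)⁻¹) / Real.logb 2 k +
              (∑ a, α a * Real.logb 2 (α a / β a)) / Real.logb 2 k)⁻¹)) := by
  have : Nonempty (Fin k) := ⟨⟨0, by omega⟩⟩
  have hL : 0 < ∑ a, α a * Real.logb 2 (β a)⁻¹ :=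
    crossEntropy_pos hαpos hβpos (lt_one_of_sum_eq_one (by rw [Fintype.card_fin]; omega) hβpos hβ1)
  have hmean := tendsto_sum_map_div_of_tendsto_count_div _ α (fun a => Real.logb 2 (β a)⁻¹) hfreq
  rw [← add_div, entropy_add_klDiv_eq_crossEntropy α β fun a => (hβpos a).ne', inv_div]
  refine (tendsto_const_nhds.div hmean hL.ne').congr fun n => ?_
  rw [Pi.div_apply, div_div_eq_mul_div, mul_comm]

/-- if `S ∈ FREQ^α` with `α, β` positive probability measures on
`Fin k`, then `I_μ(w)/I_β(w) → 1/(H_k(α) + D_k(α‖β))` as `w → S`, where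
`I_μ(w) = |w| log k`, `H_k(α) = H(α)/log k`, `D_k(α‖β) = D(α‖β)/log k`. -/
theorem selfInfo_ratio_tendsto
    (k : ℕ) (hk : 2 ≤ k)
    (α β : Fin k → ℝ) (hαpos : ∀ a, 0 < α a) (hβpos : ∀ a, 0 < β a)
    (hα1 : ∑ a, α a = 1) (hβ1 : ∑ a, β a = 1)
    (S : ℕ → Fin k)
    (hfreq : ∀ a : Fin k, Filter.Tendsto
      (fun n => (((List.range n).map S).count a : ℝ) / n) Filter.atTop (nhds (α a))) :
    Filter.Tendsto
      (fun n : ℕ => ((n : ℝ) * Real.logb 2 k) /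
        (((List.range n).map S).map fun a => Real.logb 2 (β a)⁻¹).sum)
      Filter.atTop
      (nhds (((∑ a, α a * Real.logb 2 (α a)⁻¹) / Real.logb 2 k +
              (∑ a, α a * Real.logb 2 (α a / β a)) / Real.logb 2 k)⁻¹)) :=
  selfInfo_ratio_tendsto_general k hk α β hαpos hβpos hβ1 S hfreq
end

section
/- Given the entropy-rate characterization of finite-state dimension (dim_FS(S) = inf_{l≥1} H_l^−(S) and Dim_FS(S) = inf_{l≥1} H_l^+(S)), every α-normal sequence R satisfies dim_FS(R) = Dim_FS(R) = H_k(α) = H(α)/log k. -/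
open Filter
open scoped Classical

/-- The `n`-th aligned block frequency of the length-`l` block `w` in `R`. -/
noncomputable def blockFreq {k : ℕ} (l : ℕ) (R : ℕ → Fin k) (n : ℕ)
    (w : Fin l → Fin k) : ℝ :=
  (((Finset.range n).filter fun j => ∀ i : Fin l, R (j * l + i) = w i).card : ℝ) / n

/-- `R` is `α`-normal: every aligned block frequency converges to the product
probability `α(w)`. -/
def IsNormal {k : ℕ} (α : Fin k → ℝ) (R : ℕ → Fin k) : Prop :=
  ∀ l : ℕ, 0 < l → ∀ w : Fin l → Fin k,
    Tendsto (fun n => blockFreq l R n w) atTop (nhds (∏ i, α (w i)))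

lemma negMulLog_mul' (a b : ℝ) :
    Real.negMulLog (a * b) = b * Real.negMulLog a + a * Real.negMulLog b := by
  rcases eq_or_ne a 0 with ha | ha
  · simp [ha, Real.negMulLog]
  rcases eq_or_ne b 0 with hb | hb
  · simp [hb, Real.negMulLog]
  · simp [Real.negMulLog, Real.log_mul ha hb]; ring

lemma sum_fun_succ {k l : ℕ} (f : (Fin (l+1) → Fin k) → ℝ) :
    ∑ w : Fin (l+1) → Fin k, f w = ∑ a : Fin k, ∑ w : Fin l → Fin k, f (Fin.cons a w) := by
  rw [← (Fin.consEquiv fun _ : Fin (l+1) => Fin k).sum_comp f]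
  simp [Fintype.sum_prod_type, Fin.consEquiv]

lemma sum_prod_one {k : ℕ} (α : Fin k → ℝ) (hα1 : ∑ a, α a = 1) :
    ∀ l : ℕ, ∑ w : Fin l → Fin k, ∏ i, α (w i) = 1 := by
  intro l
  induction l with
  | zero => simp
  | succ l ih =>
    rw [sum_fun_succ]
    simp only [Fin.prod_univ_succ, Fin.cons_zero, Fin.cons_succ, ← Finset.mul_sum, ih]
    simpa using hα1

lemma sum_negMulLog_prod {k : ℕ} (α : Fin k → ℝ) (hα1 : ∑ a, α a = 1) :
    ∀ l : ℕ, ∑ w : Fin l → Fin k, Real.negMulLog (∏ i, α (w i)) =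
      l * ∑ a, Real.negMulLog (α a) := by
  intro l
  induction l with
  | zero => simp [Real.negMulLog]
  | succ l ih =>
    rw [sum_fun_succ]
    simp only [Fin.prod_univ_succ, Fin.cons_zero, Fin.cons_succ, negMulLog_mul']
    rw [Finset.sum_congr rfl (fun a _ => Finset.sum_add_distrib)]
    rw [Finset.sum_add_distrib]
    have h1 : ∀ a : Fin k, ∑ w : Fin l → Fin k, (∏ i, α (w i)) * Real.negMulLog (α a)
        = Real.negMulLog (α a) := by
      intro a; rw [← Finset.sum_mul, sum_prod_one α hα1 l, one_mul]
    have h2 : ∀ a : Fin k, ∑ w : Fin l → Fin k, α a * Real.negMulLog (∏ i, α (w i))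
        = α a * (l * ∑ b, Real.negMulLog (α b)) := by
      intro a; rw [← Finset.mul_sum, ih]
    rw [Finset.sum_congr rfl (fun a _ => h1 a), Finset.sum_congr rfl (fun a _ => h2 a),
      ← Finset.sum_mul, hα1]
    push_cast
    ring

/-- with finite-state (strong) dimension defined via the entropy
rate characterization `dim_FS(S) = inf_l H_l^-(S)` and `Dim_FS(S) = inf_l H_l^+(S)`,
every `α`-normal sequence `R` satisfies `dim_FS(R) = Dim_FS(R) = H(α)/log k`. -/
theorem finite_state_dimension_of_normal
    (k : ℕ) (hk : 2 ≤ k)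
    (α : Fin k → ℝ) (hα0 : ∀ a, 0 ≤ α a) (hα1 : ∑ a, α a = 1)
    (R : ℕ → Fin k) (hnorm : IsNormal α R) :
    (⨅ l : ℕ+, ((l : ℝ) * Real.logb 2 k)⁻¹ *
        liminf (fun n => ∑ w : Fin (l : ℕ) → Fin k,
          blockFreq (l : ℕ) R n w * Real.logb 2 (blockFreq (l : ℕ) R n w)⁻¹) atTop) =
      (∑ a, α a * Real.logb 2 (α a)⁻¹) / Real.logb 2 k ∧
    (⨅ l : ℕ+, ((l : ℝ) * Real.logb 2 k)⁻¹ *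
        limsup (fun n => ∑ w : Fin (l : ℕ) → Fin k,
          blockFreq (l : ℕ) R n w * Real.logb 2 (blockFreq (l : ℕ) R n w)⁻¹) atTop) =
      (∑ a, α a * Real.logb 2 (α a)⁻¹) / Real.logb 2 k := by
  have hk2 : (2:ℝ) ≤ (k:ℝ) := by exact_mod_cast hk
  have hlogbk : 0 < Real.logb 2 (k:ℝ) := Real.logb_pos one_lt_two (by linarith)
  have hlog2 : Real.log 2 ≠ 0 := ne_of_gt (Real.log_pos one_lt_two)
  have hfun : ∀ x : ℝ, x * Real.logb 2 x⁻¹ = Real.negMulLog x / Real.log 2 := by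
    intro x
    simp only [Real.negMulLog, Real.logb, Real.log_inv]
    ring
  set E := ∑ a, Real.negMulLog (α a) with hE
  have hRHS : (∑ a, α a * Real.logb 2 (α a)⁻¹) = E / Real.log 2 := by
    simp only [hfun, hE]; rw [Finset.sum_div]
  have key : ∀ l : ℕ+, Tendsto (fun n => ∑ w : Fin (l:ℕ) → Fin k,
      blockFreq (l:ℕ) R n w * Real.logb 2 (blockFreq (l:ℕ) R n w)⁻¹) atTop
      (nhds ((l:ℝ) * E / Real.log 2)) := by
    intro l
    have hval : ∑ w : Fin (l:ℕ) → Fin k, Real.negMulLog (∏ i, α (w i)) / Real.log 2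
        = (l:ℝ) * E / Real.log 2 := by
      rw [← Finset.sum_div, sum_negMulLog_prod α hα1 (l:ℕ)]
    simp only [hfun]
    rw [← hval]
    apply tendsto_finset_sum
    intro w _
    exact ((Real.continuous_negMulLog.tendsto _).comp (hnorm (l:ℕ) l.pos w)).div_const _
  have harith : ∀ l : ℕ+, ((l:ℝ) * Real.logb 2 (k:ℝ))⁻¹ * ((l:ℝ) * E / Real.log 2)
      = E / Real.log 2 / Real.logb 2 (k:ℝ) := by
    intro l
    have hl : (l:ℝ) ≠ 0 := by exact_mod_cast l.ne_zero
    field_simp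
  constructor
  · have : ∀ l : ℕ+, ((l : ℝ) * Real.logb 2 k)⁻¹ *
        liminf (fun n => ∑ w : Fin (l : ℕ) → Fin k,
          blockFreq (l : ℕ) R n w * Real.logb 2 (blockFreq (l : ℕ) R n w)⁻¹) atTop
        = E / Real.log 2 / Real.logb 2 (k:ℝ) := by
      intro l
      rw [(key l).liminf_eq, harith l]
    rw [iInf_congr this, ciInf_const, hRHS]
  · have : ∀ l : ℕ+, ((l : ℝ) * Real.logb 2 k)⁻¹ *
        limsup (fun n => ∑ w : Fin (l : ℕ) → Fin k,
          blockFreq (l : ℕ) R n w * Real.logb 2 (blockFreq (l : ℕ) R n w)⁻¹) atTop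
        = E / Real.log 2 / Real.logb 2 (k:ℝ) := by
      intro l
      rw [(key l).limsup_eq, harith l]
    rw [iInf_congr this, ciInf_const, hRHS]
end

section
/- If α and β are positive probability measures on Σ and S ∈ FREQ^α, then for any family of functions C_i : Σ* → ℕ (indexed by a nonempty set), inf_i liminf_{w→S} C_i(w)/I_β(w) = (1/(H_k(α)+D_k(α‖β))) · inf_i liminf_{w→S} C_i(w)/(|w| log k), and similarly with limsup in place of liminf. In particular, finite-state β-dimension as defined by compression satisfies dim_FS^β(S) = dim_FS(S)/(H_k(α)+D_k(α‖β)). -/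
open Filter

/-- The length-`n` prefix of the sequence `S`. -/
def pref {k : ℕ} (S : ℕ → Fin k) (n : ℕ) : List (Fin k) := (List.range n).map S

/-- Self-information `I_β(w) = Σ_{i<|w|} log(1/β(w[i]))` (base-2 logs). -/
noncomputable def selfInfo {k : ℕ} (β : Fin k → ℝ) (w : List (Fin k)) : ℝ :=
  (w.map fun a => Real.logb 2 (β a)⁻¹).sum

/-! By the frequency hypothesis, `I_β(S↾n) / n` tends to the cross entropy
`H(α) + D(α‖β) = ∑ α a log (1 / β a)`, which is positive. Hence `C_i(w) / I_β(w)` and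
`C_i(w) / (|w| log k)` differ by a factor converging to `log k / (H(α) + D(α‖β)) ∈ (0, ∞)`,
and such a factor passes through `liminf`, `limsup` (in `ℝ≥0∞`) and the infimum over `i`. -/

open scoped ENNReal Topology

namespace ENNReal

variable {ι : Type*} {f : Filter ι} [f.NeBot] {r g : ι → ℝ≥0∞} {c : ℝ≥0∞}

theorem limsup_mul_of_tendsto_left (hr : Tendsto r f (𝓝 c)) (hc₀ : c ≠ 0) (hc : c ≠ ∞) :
    limsup (r * g) f = c * limsup g f := by
  refine le_antisymm ?_ ?_
  · simpa [hr.limsup_eq] using limsup_mul_le' (u := r) (v := g) (f := f)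
      (by simp [hr.limsup_eq, hc₀]) (by simp [hr.limsup_eq, hc])
  · simpa [hr.liminf_eq, mul_comm] using le_limsup_mul (u := g) (v := r) (f := f)

theorem liminf_mul_of_tendsto_left (hr : Tendsto r f (𝓝 c)) (hc₀ : c ≠ 0) (hc : c ≠ ∞) :
    liminf (r * g) f = c * liminf g f := by
  refine le_antisymm ?_ ?_
  · simpa [hr.limsup_eq] using liminf_mul_le (u := r) (v := g) (f := f)
      (by simp [hr.limsup_eq, hc₀]) (by simp [hr.limsup_eq, hc])
  · simpa [hr.liminf_eq] using le_liminf_mul (u := r) (v := g) (f := f)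

theorem ofReal_div_eq_ofReal_div_mul {a b : ℝ} (ha : 0 < a) (hb : 0 ≤ b) (x : ℝ) :
    ENNReal.ofReal (x / b) = ENNReal.ofReal (a / b) * ENNReal.ofReal (x / a) := by
  rw [← ofReal_mul (div_nonneg ha.le hb), div_mul_div_comm, mul_comm a,
    mul_div_mul_right _ _ ha.ne']

end ENNReal

section Entropy

variable {σ : Type*} [Fintype σ]

theorem lt_one_of_sum_eq_one_s16 {β : σ → ℝ} (hβ : ∀ a, 0 < β a) (hβ1 : ∑ a, β a = 1)
    (hσ : 1 < Fintype.card σ) (a : σ) : β a < 1 := by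
  obtain ⟨b, hb⟩ := Fintype.exists_ne_of_one_lt_card hσ a
  calc β a < ∑ x, β x := Finset.single_lt_sum hb (Finset.mem_univ a) (Finset.mem_univ b)
        (hβ b) (fun c _ _ => (hβ c).le)
    _ = 1 := hβ1

noncomputable def crossEntropy (α β : σ → ℝ) : ℝ := ∑ a, α a * Real.logb 2 (β a)⁻¹

theorem mul_logb_inv_add_mul_logb_div (p : ℝ) {q : ℝ} (hq : q ≠ 0) :
    p * Real.logb 2 p⁻¹ + p * Real.logb 2 (p / q) = p * Real.logb 2 q⁻¹ := by
  rcases eq_or_ne p 0 with rfl | hp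
  · simp
  rw [Real.logb_div hp hq, Real.logb_inv, Real.logb_inv]
  ring

theorem entropy_add_divergence_eq_crossEntropy {α β : σ → ℝ} (hβ : ∀ a, β a ≠ 0) :
    ∑ a, α a * Real.logb 2 (α a)⁻¹ + ∑ a, α a * Real.logb 2 (α a / β a) =
      crossEntropy α β := by
  rw [← Finset.sum_add_distrib]
  exact Finset.sum_congr rfl fun a _ => mul_logb_inv_add_mul_logb_div _ (hβ a)

theorem crossEntropy_pos_s16 [Nonempty σ] {α β : σ → ℝ} (hα : ∀ a, 0 < α a) (hβ : ∀ a, 0 < β a)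
    (hβ_lt : ∀ a, β a < 1) : 0 < crossEntropy α β :=
  Finset.sum_pos (fun a _ => mul_pos (hα a)
    (Real.logb_pos one_lt_two ((one_lt_inv_iff₀).2 ⟨hβ a, hβ_lt a⟩))) Finset.univ_nonempty

end Entropy

section SelfInformation

variable {k : ℕ}

theorem selfInfo_eq_sum_count (β : Fin k → ℝ) (w : List (Fin k)) :
    selfInfo β w = ∑ a, (w.count a : ℝ) * Real.logb 2 (β a)⁻¹ := by
  induction w with
  | nil => simp [selfInfo]
  | cons x w ih =>
    have hcons : selfInfo β (x :: w) = Real.logb 2 (β x)⁻¹ + selfInfo β w := by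
      simp [selfInfo]
    rw [hcons, ih]
    simp only [List.count_cons, beq_iff_eq, Nat.cast_add, Nat.cast_ite, Nat.cast_one,
      Nat.cast_zero, add_mul, Finset.sum_add_distrib, ite_mul, one_mul, zero_mul,
      Finset.sum_ite_eq, Finset.mem_univ, if_true]
    ring

theorem selfInfo_nonneg {β : Fin k → ℝ} (hβ : ∀ a, 0 < β a) (hβ_le : ∀ a, β a ≤ 1)
    (w : List (Fin k)) : 0 ≤ selfInfo β w :=
  List.sum_nonneg fun _ hx => by
    obtain ⟨a, -, rfl⟩ := List.mem_map.1 hx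
    exact Real.logb_nonneg one_lt_two ((one_le_inv₀ (hβ a)).2 (hβ_le a))

theorem tendsto_selfInfo_pref_div {α : Fin k → ℝ} (β : Fin k → ℝ) {S : ℕ → Fin k}
    (hfreq : ∀ a, Tendsto (fun n : ℕ => ((pref S n).count a : ℝ) / n) atTop (𝓝 (α a))) :
    Tendsto (fun n : ℕ => selfInfo β (pref S n) / n) atTop (𝓝 (crossEntropy α β)) := by
  refine (tendsto_finsetSum _ fun a _ => (hfreq a).mul_const (Real.logb 2 (β a)⁻¹)).congr
    fun n => ?_
  rw [selfInfo_eq_sum_count, Finset.sum_div]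
  exact Finset.sum_congr rfl fun a _ => by ring

end SelfInformation

theorem finite_state_beta_dimension_freq_formula_general
    (k : ℕ) (hk : 2 ≤ k)
    (α β : Fin k → ℝ) (hαpos : ∀ a, 0 < α a) (hβpos : ∀ a, 0 < β a)
    (hβ1 : ∑ a, β a = 1)
    (S : ℕ → Fin k)
    (hfreq : ∀ a : Fin k, Tendsto
      (fun n : ℕ => ((pref S n).count a : ℝ) / n) atTop (nhds (α a)))
    (ι : Type) (C : ι → List (Fin k) → ℕ) :
    (⨅ i, liminf (fun n : ℕ =>
        ENNReal.ofReal ((C i (pref S n) : ℝ) / selfInfo β (pref S n))) atTop) =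
      ENNReal.ofReal
          (((∑ a, α a * Real.logb 2 (α a)⁻¹) / Real.logb 2 k +
            (∑ a, α a * Real.logb 2 (α a / β a)) / Real.logb 2 k)⁻¹) *
        (⨅ i, liminf (fun n : ℕ =>
          ENNReal.ofReal ((C i (pref S n) : ℝ) / ((n : ℝ) * Real.logb 2 k))) atTop) ∧
    (⨅ i, limsup (fun n : ℕ =>
        ENNReal.ofReal ((C i (pref S n) : ℝ) / selfInfo β (pref S n))) atTop) =
      ENNReal.ofReal
          (((∑ a, α a * Real.logb 2 (α a)⁻¹) / Real.logb 2 k +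
            (∑ a, α a * Real.logb 2 (α a / β a)) / Real.logb 2 k)⁻¹) *
        (⨅ i, limsup (fun n : ℕ =>
          ENNReal.ofReal ((C i (pref S n) : ℝ) / ((n : ℝ) * Real.logb 2 k))) atTop) := by
  have hβlt := lt_one_of_sum_eq_one_s16 hβpos hβ1 (by rw [Fintype.card_fin]; omega)
  have : Nonempty (Fin k) := ⟨⟨0, by omega⟩⟩
  have hL := crossEntropy_pos_s16 hαpos hβpos hβlt
  have hlogk : 0 < Real.logb 2 k := Real.logb_pos one_lt_two (by exact_mod_cast hk)
  set c := ENNReal.ofReal (Real.logb 2 k / crossEntropy α β)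
  have hc₀ : c ≠ 0 := (ENNReal.ofReal_pos.2 (div_pos hlogk hL)).ne'
  have hconst : ENNReal.ofReal (((∑ a, α a * Real.logb 2 (α a)⁻¹) / Real.logb 2 k +
      (∑ a, α a * Real.logb 2 (α a / β a)) / Real.logb 2 k)⁻¹) = c := by
    rw [← add_div, entropy_add_divergence_eq_crossEntropy fun a => (hβpos a).ne', inv_div]
  set r := fun n : ℕ => ENNReal.ofReal (n * Real.logb 2 k / selfInfo β (pref S n))
  have hr : Tendsto r atTop (𝓝 c) := by
    refine ENNReal.tendsto_ofReal ?_
    refine (((tendsto_selfInfo_pref_div β hfreq).inv₀ hL.ne').const_mul (Real.logb 2 k)).congr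
      fun n => ?_
    rw [inv_div, mul_div_assoc', mul_comm]
  have hfactor (x : ℕ → ℝ) :
      (fun n => ENNReal.ofReal (x n / selfInfo β (pref S n))) =ᶠ[atTop]
        r * fun n => ENNReal.ofReal (x n / (n * Real.logb 2 k)) := by
    filter_upwards [eventually_gt_atTop 0] with n hn
    exact ENNReal.ofReal_div_eq_ofReal_div_mul (by positivity)
      (selfInfo_nonneg hβpos (fun a => (hβlt a).le) _) _
  have hc : c ≠ ∞ := ENNReal.ofReal_ne_top
  rw [hconst, ENNReal.mul_iInf_of_ne hc₀ hc, ENNReal.mul_iInf_of_ne hc₀ hc]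
  exact ⟨iInf_congr fun i => by
      rw [liminf_congr (hfactor _), ENNReal.liminf_mul_of_tendsto_left hr hc₀ hc],
    iInf_congr fun i => by
      rw [limsup_congr (hfactor _), ENNReal.limsup_mul_of_tendsto_left hr hc₀ hc]⟩

/-- Lemma 5.2, abstract form: if `α, β` are positive probability
measures and `S ∈ FREQ^α`, then for any nonempty family of compressors
`C_i : Σ* → ℕ`,
`inf_i liminf C_i(w)/I_β(w) = (1/(H_k(α)+D_k(α‖β)))·inf_i liminf C_i(w)/(|w| log k)`,
and likewise with `limsup` (computed in `ℝ≥0∞`). -/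
theorem finite_state_beta_dimension_freq_formula
    (k : ℕ) (hk : 2 ≤ k)
    (α β : Fin k → ℝ) (hαpos : ∀ a, 0 < α a) (hβpos : ∀ a, 0 < β a)
    (hα1 : ∑ a, α a = 1) (hβ1 : ∑ a, β a = 1)
    (S : ℕ → Fin k)
    (hfreq : ∀ a : Fin k, Tendsto
      (fun n : ℕ => ((pref S n).count a : ℝ) / n) atTop (nhds (α a)))
    (ι : Type) [Nonempty ι] (C : ι → List (Fin k) → ℕ) :
    (⨅ i, liminf (fun n : ℕ =>
        ENNReal.ofReal ((C i (pref S n) : ℝ) / selfInfo β (pref S n))) atTop) =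
      ENNReal.ofReal
          (((∑ a, α a * Real.logb 2 (α a)⁻¹) / Real.logb 2 k +
            (∑ a, α a * Real.logb 2 (α a / β a)) / Real.logb 2 k)⁻¹) *
        (⨅ i, liminf (fun n : ℕ =>
          ENNReal.ofReal ((C i (pref S n) : ℝ) / ((n : ℝ) * Real.logb 2 k))) atTop) ∧
    (⨅ i, limsup (fun n : ℕ =>
        ENNReal.ofReal ((C i (pref S n) : ℝ) / selfInfo β (pref S n))) atTop) =
      ENNReal.ofReal
          (((∑ a, α a * Real.logb 2 (α a)⁻¹) / Real.logb 2 k +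
            (∑ a, α a * Real.logb 2 (α a / β a)) / Real.logb 2 k)⁻¹) *
        (⨅ i, limsup (fun n : ℕ =>
          ENNReal.ofReal ((C i (pref S n) : ℝ) / ((n : ℝ) * Real.logb 2 k))) atTop) :=
  finite_state_beta_dimension_freq_formula_general k hk α β hαpos hβpos hβ1 S hfreq ι C
end
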